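/- arXiv:2002.03629 — 4 statements merged into one kernel-verified Lean document; each statement's English description precedes it below -/
import Mathlib

section
/- The Gauss-Seidel-Jacobi hybrid method converges exactly: partition $\{1, \dots, T\}$ into consecutive integer-interval blocks $\mathcal{B}_1, \dots, \mathcal{B}_M$; process blocks sequentially, and within block $\mathcal{B}_i = [a, b]$ run Jacobi iterations $\mathbf{s}_j^{k+1} = h_j(\mathbf{u}, \mathbf{s}_{1:a-1}, \mathbf{s}_{a:j-1}^{k})$ (with the already-finalized values $\mathbf{s}_{1:a-1}$ from previous blocks) for $|\mathcal{B}_i|$ iterations. Then the final output equals the feedforward solution $\mathbf{s}^*_{1:T}$, for any initializations. -/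
/-!
Within a block `[a, c)`, the first entry of the block that is not yet correct depends only on
entries before it, which are correct, so each parallel Jacobi sweep finalizes at least one
more entry: after `k` sweeps every entry below `a + k` agrees with the fixed point, and
`c - a` sweeps finalize the whole block. Induction over the blocks finishes the argument.
-/

namespace GaussSeidelJacobi

variable {S : Type*} {T : ℕ}

def AgreeBelow (n : ℕ) (x y : Fin T → S) : Prop :=
  ∀ j : Fin T, (j : ℕ) < n → x j = y j

def IsTriangular (F : Fin T → (Fin T → S) → S) : Prop :=
  ∀ (t : Fin T) (x y : Fin T → S), AgreeBelow t x y → F t x = F t y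

theorem AgreeBelow.trans {n : ℕ} {x y z : Fin T → S} (hxy : AgreeBelow n x y)
    (hyz : AgreeBelow n y z) : AgreeBelow n x z :=
  fun j hj => (hxy j hj).trans (hyz j hj)

section Block

variable {F : Fin T → (Fin T → S) → S} {sStar : Fin T → S} {a c : ℕ}
  {w : ℕ → Fin T → S}

theorem jacobi_block_agree (hF : IsTriangular F) (hfix : ∀ t, sStar t = F t sStar)
    (hleft : ∀ k, AgreeBelow a (w k) sStar)
    (hup : ∀ k, ∀ j : Fin T, a ≤ (j : ℕ) → (j : ℕ) < c → w (k + 1) j = F j (w k)) :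
    ∀ k, ∀ j : Fin T, (j : ℕ) < a + k → (j : ℕ) < c → w k j = sStar j := by
  intro k
  induction k with
  | zero => exact fun j hj _ => hleft 0 j hj
  | succ k ih =>
    intro j hjk hjc
    rcases lt_or_ge (j : ℕ) a with hja | haj
    · exact hleft (k + 1) j hja
    · rw [hup k j haj hjc, hfix j]
      exact hF j _ _ fun i hi => ih i (by omega) (by omega)

theorem agreeBelow_of_jacobi_block {s : Fin T → S} (hF : IsTriangular F)
    (hfix : ∀ t, sStar t = F t sStar) (hs : AgreeBelow a s sStar)
    (hleft : ∀ k, AgreeBelow a (w k) s)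
    (hup : ∀ k, ∀ j : Fin T, a ≤ (j : ℕ) → (j : ℕ) < c → w (k + 1) j = F j (w k))
    (hfin : ∀ j : Fin T, a ≤ (j : ℕ) → (j : ℕ) < c → s j = w (c - a) j) :
    AgreeBelow c s sStar := by
  intro j hjc
  rcases lt_or_ge (j : ℕ) a with hja | haj
  · exact hs j hja
  · rw [hfin j haj hjc]
    exact jacobi_block_agree hF hfix (fun k => (hleft k).trans hs) hup (c - a) j (by omega) hjc

end Block

end GaussSeidelJacobi

open GaussSeidelJacobi in
theorem gs_jacobi_converges_general {S U : Type*} {T M : ℕ}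
    (h : Fin T → U → (Fin T → S) → S)
    (htri : ∀ (t : Fin T) (u : U) (x y : Fin T → S),
      (∀ j : Fin T, (j : ℕ) < (t : ℕ) → x j = y j) → h t u x = h t u y)
    (u : U) (sStar : Fin T → S)
    (hstar : ∀ t, sStar t = h t u sStar)
    (b : ℕ → ℕ)
    (hb0 : b 0 = 0) (hbM : b M = T)
    (s : Fin T → S)                       -- final output
    (w : ℕ → ℕ → Fin T → S)               -- within-block Jacobi iterates
    -- values in earlier blocks are the already-finalized outputs:
    (hleft : ∀ i, i < M → ∀ k, ∀ j : Fin T, (j : ℕ) < b i → w i k j = s j)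
    -- within-block parallel Jacobi update:
    (hup : ∀ i, i < M → ∀ k, ∀ j : Fin T,
      b i ≤ (j : ℕ) → (j : ℕ) < b (i + 1) → w i (k + 1) j = h j u (w i k))
    -- after `|B_i|` iterations the block is finalized:
    (hfin : ∀ i, i < M → ∀ j : Fin T,
      b i ≤ (j : ℕ) → (j : ℕ) < b (i + 1) → s j = w i (b (i + 1) - b i) j) :
    s = sStar := by
  have hF : IsTriangular fun t => h t u := fun t => htri t u
  have hagree : ∀ i ≤ M, AgreeBelow (b i) s sStar := by
    intro i
    induction i with
    | zero => intro _ j hj; simp [hb0] at hj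
    | succ i ih =>
      intro hi
      exact agreeBelow_of_jacobi_block hF hstar (ih (by omega)) (hleft i hi) (hup i hi)
        (hfin i hi)
  funext j
  exact hagree M le_rfl j (hbM ▸ j.isLt)

/-- The Gauss-Seidel-Jacobi hybrid method converges exactly: processing
consecutive blocks `[b i, b (i+1))` sequentially, running `|B_i|` parallel
Jacobi iterations within each block (conditioning on finalized earlier
blocks), the final output equals the feedforward solution. -/
theorem gs_jacobi_converges {S U : Type*} {T M : ℕ}
    (h : Fin T → U → (Fin T → S) → S)
    (htri : ∀ (t : Fin T) (u : U) (x y : Fin T → S),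
      (∀ j : Fin T, (j : ℕ) < (t : ℕ) → x j = y j) → h t u x = h t u y)
    (u : U) (sStar : Fin T → S)
    (hstar : ∀ t, sStar t = h t u sStar)
    (b : ℕ → ℕ)
    (hb0 : b 0 = 0) (hbM : b M = T)
    (hbmono : ∀ i, i < M → b i < b (i + 1))
    (s : Fin T → S)                       -- final output
    (w : ℕ → ℕ → Fin T → S)               -- within-block Jacobi iterates
    -- values in earlier blocks are the already-finalized outputs:
    (hleft : ∀ i, i < M → ∀ k, ∀ j : Fin T, (j : ℕ) < b i → w i k j = s j)
    -- within-block parallel Jacobi update: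
    (hup : ∀ i, i < M → ∀ k, ∀ j : Fin T,
      b i ≤ (j : ℕ) → (j : ℕ) < b (i + 1) → w i (k + 1) j = h j u (w i k))
    -- after `|B_i|` iterations the block is finalized:
    (hfin : ∀ i, i < M → ∀ j : Fin T,
      b i ≤ (j : ℕ) → (j : ℕ) < b (i + 1) → s j = w i (b (i + 1) - b i) j) :
    s = sStar :=
  gs_jacobi_converges_general h htri u sStar hstar b hb0 hbM s w hleft hup hfin
end

section
/- Markov chain worst case: let $\mathbf{s}_1 = h_1(\mathbf{u})$ and $\mathbf{s}_t = h_t(\mathbf{s}_{t-1})$ for $t > 1$ (each $h_t$, $t>1$, depends only on the immediately preceding state). For the Jacobi iteration with a fixed initialization $\mathbf{s}^0$, the iterate $\mathbf{s}_T^k$ for $k < T$ is a function of $\mathbf{s}^0$ alone and does not depend on the input $\mathbf{u}$. Consequently, if there exist two inputs $\mathbf{u}, \mathbf{u}'$ whose feedforward solutions differ at coordinate $T$, then for at least one of them the Jacobi iteration from $\mathbf{s}^0$ has not converged at coordinate $T$ after $T-1$ iterations. -/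
/-! Unrolling the Markov recurrence, `s^k_t = h_t (s^{k-1}_{t-1}) = ⋯ = (h_t ∘ ⋯ ∘ h_{t-k+1}) (s^0_{t-k})`
for `k ≤ t`, never reaches the coordinate `0`, the only one that reads the input. So the
Jacobi iterate at coordinate `T - 1` is the same for all inputs during the first `T` iterations,
and it cannot match two different feedforward solutions after `T - 1` of them. -/

theorem jacobi_iterate_eq_of_le {S U : Type*} (g : ℕ → S → S) (s0 : ℕ → S)
    (s : U → ℕ → ℕ → S) (hinit : ∀ u t, s u 0 t = s0 t)
    (hup : ∀ u k t, s u (k + 1) (t + 1) = g (t + 1) (s u k t))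
    {k t : ℕ} (hkt : k ≤ t) (u u' : U) : s u k t = s u' k t := by
  induction k generalizing t with
  | zero => rw [hinit, hinit]
  | succ k ih =>
    obtain ⟨t, rfl⟩ : ∃ t', t = t' + 1 := ⟨t - 1, by omega⟩
    rw [hup, hup, ih (by omega)]

theorem jacobi_markov_worst_case_general {S U : Type*} (T : ℕ)
    (g : ℕ → S → S) (s0 : ℕ → S)
    (s : U → ℕ → ℕ → S)
    (hinit : ∀ u t, s u 0 t = s0 t)
    (hup : ∀ u k t, s u (k + 1) (t + 1) = g (t + 1) (s u k t))
    (star : U → ℕ → S) :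
    (∀ (u u' : U) (k : ℕ), k < T → s u k (T - 1) = s u' k (T - 1)) ∧
    (∀ u u' : U, star u (T - 1) ≠ star u' (T - 1) →
      s u (T - 1) (T - 1) ≠ star u (T - 1) ∨
      s u' (T - 1) (T - 1) ≠ star u' (T - 1)) := by
  refine ⟨fun u u' k hk => jacobi_iterate_eq_of_le g s0 s hinit hup (by omega) u u',
    fun u u' hne => ?_⟩
  by_contra! hconv
  exact hne (hconv.1 ▸ hconv.2 ▸ jacobi_iterate_eq_of_le g s0 s hinit hup le_rfl u u')

/-- Markov chain worst case (states indexed `0, …, T-1`): the Jacobi iterate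
at the last coordinate is independent of the input for fewer than `T`
iterations; hence if two inputs have feedforward solutions differing at the
last coordinate, for at least one of them Jacobi has not converged there
after `T - 1` iterations. -/
theorem jacobi_markov_worst_case {S U : Type*} (T : ℕ) (hT : 1 ≤ T)
    (h1 : U → S) (g : ℕ → S → S) (s0 : ℕ → S)
    (s : U → ℕ → ℕ → S)
    (hinit : ∀ u t, s u 0 t = s0 t)
    (hup0 : ∀ u k, s u (k + 1) 0 = h1 u)
    (hup : ∀ u k t, s u (k + 1) (t + 1) = g (t + 1) (s u k t))
    (star : U → ℕ → S)
    (hstar0 : ∀ u, star u 0 = h1 u)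
    (hstar : ∀ u t, star u (t + 1) = g (t + 1) (star u t)) :
    (∀ (u u' : U) (k : ℕ), k < T → s u k (T - 1) = s u' k (T - 1)) ∧
    (∀ u u' : U, star u (T - 1) ≠ star u' (T - 1) →
      s u (T - 1) (T - 1) ≠ star u (T - 1) ∨
      s u' (T - 1) (T - 1) ≠ star u' (T - 1)) :=
  jacobi_markov_worst_case_general T g s0 s hinit hup star
end

section
/- In the Markov chain setting, information propagates exactly one step per Jacobi iteration: for $k \geq 0$ and $t > k$, the Jacobi iterate $\mathbf{s}_t^k$ equals $h_t(h_{t-1}(\cdots h_{t-k+1}(\mathbf{s}_{t-k}^0)))$ (a function of the initialization only), while for $t \leq k$ it equals the true solution $\mathbf{s}_t^*$. -/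
/-!
The Jacobi iterates `s u k t` and the true solution `star u t` (read as constant in `k`) both
satisfy the diagonal recursion `x (k + 1) (t + 1) = g (t + 1) (x k t)`. Unrolling it `j` times
expresses `x k t` through `x (k - j) (t - j)`: with `j = k ≤ t` one lands on the initialization,
with `j = t < k` on the boundary `t = 0`, where iterate and solution both equal `h1 u`.
-/

/-- `chain g t k x = g t (g (t-1) (⋯ g (t-k+1) x))`. -/
def chain {S : Type*} (g : ℕ → S → S) : ℕ → ℕ → S → S
  | _, 0, x => x
  | t, k + 1, x => g t (chain g (t - 1) k x)

theorem eq_chain_of_step {S : Type*} {g : ℕ → S → S} {x : ℕ → ℕ → S}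
    (hx : ∀ k t, x (k + 1) (t + 1) = g (t + 1) (x k t)) {j k t : ℕ} (hk : j ≤ k) (ht : j ≤ t) :
    x k t = chain g t j (x (k - j) (t - j)) := by
  induction j generalizing k t with
  | zero => rfl
  | succ j ih =>
    obtain ⟨k, rfl⟩ : ∃ k', k = k' + 1 := ⟨k - 1, by omega⟩
    obtain ⟨t, rfl⟩ : ∃ t', t = t' + 1 := ⟨t - 1, by omega⟩
    rw [hx, ih (by omega) (by omega)]
    simp only [chain, Nat.add_sub_cancel, Nat.add_sub_add_right]

/-- In the Markov setting, information propagates exactly one step per Jacobi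
iteration: for `t ≥ k` (0-indexed) the iterate `s u k t` is
`g t (g (t-1) (⋯ g (t-k+1) (s0 (t-k))))`, a function of the initialization
only, while for `t < k` it equals the true solution. -/
theorem jacobi_markov_propagation {S U : Type*}
    (h1 : U → S) (g : ℕ → S → S) (s0 : ℕ → S)
    (s : U → ℕ → ℕ → S)
    (hinit : ∀ u t, s u 0 t = s0 t)
    (hup0 : ∀ u k, s u (k + 1) 0 = h1 u)
    (hup : ∀ u k t, s u (k + 1) (t + 1) = g (t + 1) (s u k t))
    (star : U → ℕ → S)
    (hstar0 : ∀ u, star u 0 = h1 u)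
    (hstar : ∀ u t, star u (t + 1) = g (t + 1) (star u t)) :
    (∀ (u : U) (k t : ℕ), k ≤ t → s u k t = chain g t k (s0 (t - k))) ∧
    (∀ (u : U) (k t : ℕ), t < k → s u k t = star u t) := by
  refine ⟨fun u k t hkt => ?_, fun u k t htk => ?_⟩
  · rw [eq_chain_of_step (hup u) le_rfl hkt, Nat.sub_self, hinit]
  · have hstar_chain : star u t = chain g t t (h1 u) := by
      rw [eq_chain_of_step (x := fun _ => star u) (fun _ => hstar u) le_rfl le_rfl, Nat.sub_self,
        hstar0]
    obtain ⟨m, hm⟩ : ∃ m, k - t = m + 1 := ⟨k - t - 1, by omega⟩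
    rw [eq_chain_of_step (hup u) htk.le le_rfl, hm, Nat.sub_self, hup0, hstar_chain]
end

section
/- Jacobi-GS with block sizes at least $1$ converges at least as fast as Jacobi in block count: if the blocks are consecutive intervals $\mathcal{B}_1, \dots, \mathcal{B}_M$ each of size $\geq 1$, then after $k$ Jacobi-GS iterations all states with index in $\mathcal{B}_1 \cup \cdots \cup \mathcal{B}_k$ equal the true solution; in particular since $M \leq T$, the number of parallel Jacobi-GS iterations needed is at most the number of parallel Jacobi iterations needed ($M \leq T$). -/
/-!
Block `i` is correct after `k > i` sweeps by induction on `k`: when sweep `k + 1` reaches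
block `i`, every earlier block was already correct after sweep `k`, and within the block
the triangular structure lets the forward substitution reproduce the fixed point one index
at a time. Strictly increasing block boundaries starting at `0` give `i ≤ b i`, so `M ≤ T`.
-/

theorem gaussSeidel_sweep_eq_fixedPoint {S : Type*} {T : ℕ} {g : Fin T → (Fin T → S) → S}
    (htri : ∀ (t : Fin T) (x y : Fin T → S),
      (∀ j : Fin T, (j : ℕ) < (t : ℕ) → x j = y j) → g t x = g t y)
    {sStar : Fin T → S} (hstar : ∀ t, sStar t = g t sStar)
    {a c : ℕ} {x y : Fin T → S}
    (hsweep : ∀ j : Fin T, a ≤ (j : ℕ) → (j : ℕ) < c →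
      y j = g j (fun p => if (p : ℕ) < a then x p else y p))
    (hx : ∀ p : Fin T, (p : ℕ) < a → x p = sStar p) :
    ∀ j : Fin T, a ≤ (j : ℕ) → (j : ℕ) < c → y j = sStar j := by
  intro j
  induction j using WellFoundedLT.induction with
  | ind j ih =>
    intro haj hjc
    rw [hsweep j haj hjc, hstar j]
    refine htri j _ _ fun p hpj => ?_
    split_ifs with hpa
    · exact hx p hpa
    · exact ih p hpj (not_lt.mp hpa) (hpj.trans hjc)

theorem exists_block_of_lt {b : ℕ → ℕ} (hb0 : b 0 = 0) {i p : ℕ} (hp : p < b i) :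
    ∃ i' < i, b i' ≤ p ∧ p < b (i' + 1) := by
  induction i with
  | zero => simp [hb0] at hp
  | succ n ih =>
    by_cases hnp : b n ≤ p
    · exact ⟨n, n.lt_succ_self, hnp, hp⟩
    · obtain ⟨i', hi'n, hi'p, hpi'⟩ := ih (not_le.mp hnp)
      exact ⟨i', hi'n.trans n.lt_succ_self, hi'p, hpi'⟩

theorem le_apply_of_forall_lt_apply_succ {b : ℕ → ℕ} {M : ℕ} (hbmono : ∀ i, i < M → b i < b (i + 1)) :
    ∀ i, i ≤ M → i ≤ b i := by
  intro i
  induction i with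
  | zero => exact fun _ => Nat.zero_le _
  | succ n ih =>
    intro hn
    exact Nat.succ_le_of_lt ((ih (Nat.le_of_succ_le hn)).trans_lt (hbmono n hn))

/-- Jacobi-GS with nonempty consecutive blocks `B_1, …, B_M` converges at
least as fast as Jacobi in block count: after `k` iterations all states in
the first `k` blocks equal the true solution, and `M ≤ T`. -/
theorem jacobi_gs_block_speed {S U : Type*} {T M : ℕ}
    (h : Fin T → U → (Fin T → S) → S)
    (htri : ∀ (t : Fin T) (u : U) (x y : Fin T → S),
      (∀ j : Fin T, (j : ℕ) < (t : ℕ) → x j = y j) → h t u x = h t u y)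
    (u : U) (sStar : Fin T → S)
    (hstar : ∀ t, sStar t = h t u sStar)
    (b : ℕ → ℕ)
    (hb0 : b 0 = 0) (hbM : b M = T)
    (hbmono : ∀ i, i < M → b i < b (i + 1))
    (s : ℕ → Fin T → S)
    (hup : ∀ k, ∀ i, i < M → ∀ j : Fin T,
      b i ≤ (j : ℕ) → (j : ℕ) < b (i + 1) →
      s (k + 1) j =
        h j u (fun p => if (p : ℕ) < b i then s k p else s (k + 1) p)) :
    (∀ k, ∀ i, i < M → i < k → ∀ j : Fin T,
      b i ≤ (j : ℕ) → (j : ℕ) < b (i + 1) → s k j = sStar j) ∧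
    M ≤ T := by
  refine ⟨fun k => ?_, hbM ▸ le_apply_of_forall_lt_apply_succ hbmono M le_rfl⟩
  induction k with
  | zero => exact fun i _ hi => absurd hi (Nat.not_lt_zero i)
  | succ k ih =>
    intro i hiM hik
    refine gaussSeidel_sweep_eq_fixedPoint (htri · u) hstar (hup k i hiM) fun p hp => ?_
    obtain ⟨i', hi'i, hi'p, hpi'⟩ := exists_block_of_lt hb0 hp
    exact ih i' (hi'i.trans hiM) (hi'i.trans_le (Nat.le_of_lt_succ hik)) p hi'p hpi'
end
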